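/- arXiv:2204.05969 — 3 statements merged into one kernel-verified Lean document; each statement's English description precedes it below -/
import Mathlib

section
/- For every position i with 1 ≤ i < n: position i is S-type if and only if suffix(i) ≺ suffix(i+1), and position i is L-type if and only if suffix(i+1) ≺ suffix(i). -/
/-- Auxiliary S-type classification with explicit fuel `n - i`. -/
def STypeAux {α : Type*} [LinearOrder α] (T : ℕ → α) : ℕ → ℕ → Prop
  | 0, _ => True
  | k + 1, i => T i < T (i + 1) ∨ (T i = T (i + 1) ∧ STypeAux T k (i + 1))

/-- Position `i` of `T[1..n]` is S-type. -/
def SType {α : Type*} [LinearOrder α] (T : ℕ → α) (n i : ℕ) : Prop :=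
  STypeAux T (n - i) i

/-- Auxiliary L-type classification with explicit fuel `n - i`. -/
def LTypeAux {α : Type*} [LinearOrder α] (T : ℕ → α) : ℕ → ℕ → Prop
  | 0, _ => False
  | k + 1, i => T (i + 1) < T i ∨ (T i = T (i + 1) ∧ LTypeAux T k (i + 1))

/-- Position `i` of `T[1..n]` is L-type. -/
def LType {α : Type*} [LinearOrder α] (T : ℕ → α) (n i : ℕ) : Prop :=
  LTypeAux T (n - i) i

/-- Position `i` of `T[1..n]` is LMS-type. -/
def LMSType {α : Type*} [LinearOrder α] (T : ℕ → α) (n i : ℕ) : Prop :=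
  1 < i ∧ SType T n i ∧ LType T n (i - 1)

/-- `suf T n i` is the suffix `T[i..n]` of `T[1..n]` as a list. -/
def suf {α : Type*} (T : ℕ → α) (n i : ℕ) : List α :=
  (List.range (n + 1 - i)).map fun k => T (i + k)

/-- rank of suffix p among all suffixes of T[1..n]. -/
noncomputable def rnk {α : Type*} [LinearOrder α] (T : ℕ → α) (n p : ℕ) : ℕ :=
  1 + Set.ncard {q : ℕ | 1 ≤ q ∧ q ≤ n ∧ List.Lex (· < ·) (suf T n q) (suf T n p)}

/-- `p` is an LMS-suffix occurrence of string `S` (|S| ≥ 2) in `T[1..n]`. -/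
def IsLMSSuffixOcc {α : Type*} [LinearOrder α] (T : ℕ → α) (n : ℕ) (S : List α) (p : ℕ) : Prop :=
  1 ≤ p ∧ p + S.length - 1 ≤ n ∧
    ((List.range S.length).map fun k => T (p + k)) = S ∧
    LMSType T n (p + S.length - 1) ∧
    ∀ k, p < k → k < p + S.length - 1 → ¬ LMSType T n k

lemma my_lex_cons_iff {α : Type*} (r : α → α → Prop) (a b : α) (l₁ l₂ : List α) :
    List.Lex r (a :: l₁) (b :: l₂) ↔ r a b ∨ (a = b ∧ List.Lex r l₁ l₂) := by
  constructor
  · intro h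
    cases h with
    | rel h => exact Or.inl h
    | cons h => exact Or.inr ⟨rfl, h⟩
  · rintro (h | ⟨rfl, h⟩)
    · exact List.Lex.rel h
    · exact List.Lex.cons h

lemma suf_cons' {α : Type*} (T : ℕ → α) (n i : ℕ) (h : i ≤ n) :
    suf T n i = T i :: suf T n (i + 1) := by
  unfold suf
  rw [show n + 1 - i = (n + 1 - (i+1)) + 1 by omega, List.range_succ_eq_map]
  simp only [List.map_cons, List.map_map]
  congr 1
  apply List.map_congr_left
  intro k _
  simp only [Function.comp]
  congr 1
  omega

lemma suf_past' {α : Type*} (T : ℕ → α) (n : ℕ) : suf T n (n + 1) = [] := by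
  unfold suf; simp

lemma SType_succ_iff {α : Type*} [LinearOrder α] (T : ℕ → α) (n i : ℕ) (h : i < n) :
    SType T n i ↔ T i < T (i + 1) ∨ (T i = T (i + 1) ∧ SType T n (i + 1)) := by
  unfold SType
  rw [show n - i = (n - (i + 1)) + 1 by omega]
  simp [STypeAux]

lemma LType_succ_iff {α : Type*} [LinearOrder α] (T : ℕ → α) (n i : ℕ) (h : i < n) :
    LType T n i ↔ T (i + 1) < T i ∨ (T i = T (i + 1) ∧ LType T n (i + 1)) := by
  unfold LType
  rw [show n - i = (n - (i + 1)) + 1 by omega]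
  simp [LTypeAux]

lemma SType_self {α : Type*} [LinearOrder α] (T : ℕ → α) (n : ℕ) : SType T n n := by
  unfold SType; rw [Nat.sub_self]; trivial

lemma LType_self {α : Type*} [LinearOrder α] (T : ℕ → α) (n : ℕ) : ¬ LType T n n := by
  unfold LType; rw [Nat.sub_self]; exact id

/-- for `1 ≤ i < n`, position `i` is S-type iff
`suffix(i) ≺ suffix(i+1)`, and L-type iff `suffix(i+1) ≺ suffix(i)`. -/
theorem stmt2 {α : Type*} [LinearOrder α] (T : ℕ → α) (n : ℕ) (sent : α)
    (hn : 2 ≤ n) (hTn : T n = sent)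
    (hsent : ∀ a : α, a ≠ sent → sent < a)
    (hT : ∀ i, 1 ≤ i → i < n → T i ≠ sent) :
    ∀ i, 1 ≤ i → i < n →
      (SType T n i ↔ List.Lex (· < ·) (suf T n i) (suf T n (i + 1))) ∧
      (LType T n i ↔ List.Lex (· < ·) (suf T n (i + 1)) (suf T n i)) := by
  have key : ∀ d i, 1 ≤ i → i < n → n - i ≤ d + 1 →
      (SType T n i ↔ List.Lex (· < ·) (suf T n i) (suf T n (i + 1))) ∧
      (LType T n i ↔ List.Lex (· < ·) (suf T n (i + 1)) (suf T n i)) := by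
    intro d
    induction d with
    | zero =>
      intro i h1 h2 hd
      have hi : i + 1 = n := by omega
      have hne : T i ≠ T (i + 1) := by
        rw [hi, hTn]; exact hT i h1 h2
      have hlt : T (i + 1) < T i := by
        rw [hi, hTn]; exact hsent _ (hT i h1 h2)
      have hnil : suf T n (i + 1 + 1) = [] := by rw [hi]; exact suf_past' T n
      rw [suf_cons' T n i (by omega), suf_cons' T n (i + 1) (by omega), hnil,
        my_lex_cons_iff, my_lex_cons_iff, SType_succ_iff T n i h2, LType_succ_iff T n i h2]
      constructor
      · constructor
        · rintro (h | ⟨h, _⟩)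
          · exact absurd h (not_lt.mpr hlt.le)
          · exact absurd h hne
        · rintro (h | ⟨h, hl⟩)
          · exact absurd h (not_lt.mpr hlt.le)
          · cases hl
      · constructor
        · intro _; exact Or.inl hlt
        · intro _; exact Or.inl hlt
    | succ d ih =>
      intro i h1 h2 hd
      by_cases hcase : i + 1 = n
      · -- same as base case
        have hne : T i ≠ T (i + 1) := by
          rw [hcase, hTn]; exact hT i h1 h2
        have hlt : T (i + 1) < T i := by
          rw [hcase, hTn]; exact hsent _ (hT i h1 h2)
        have hnil : suf T n (i + 1 + 1) = [] := by rw [hcase]; exact suf_past' T n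
        rw [suf_cons' T n i (by omega), suf_cons' T n (i + 1) (by omega), hnil,
          my_lex_cons_iff, my_lex_cons_iff, SType_succ_iff T n i h2, LType_succ_iff T n i h2]
        constructor
        · constructor
          · rintro (h | ⟨h, _⟩)
            · exact absurd h (not_lt.mpr hlt.le)
            · exact absurd h hne
          · rintro (h | ⟨h, hl⟩)
            · exact absurd h (not_lt.mpr hlt.le)
            · cases hl
        · constructor
          · intro _; exact Or.inl hlt
          · intro _; exact Or.inl hlt
      · have h2' : i + 1 < n := by omega
        obtain ⟨ihS, ihL⟩ := ih (i + 1) (by omega) h2' (by omega)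
        rw [suf_cons' T n (i + 1) (by omega)] at ihS ihL
        rw [suf_cons' T n i (by omega), suf_cons' T n (i + 1) (by omega),
          my_lex_cons_iff, my_lex_cons_iff, SType_succ_iff T n i h2, LType_succ_iff T n i h2,
          ihS, ihL]
        constructor
        · rfl
        · constructor
          · rintro (h | ⟨h, hl⟩)
            · exact Or.inl h
            · exact Or.inr ⟨h.symm, hl⟩
          · rintro (h | ⟨h, hl⟩)
            · exact Or.inl h
            · exact Or.inr ⟨h.symm, hl⟩
  intro i h1 h2
  exact key (n - i) i h1 h2 (by omega)
end

section
/- (Ko–Aluru ordering) If positions i and j of T satisfy T[i] = T[j], position i is L-type, and position j is S-type, then suffix(i) ≺ suffix(j). In words: among all suffixes of T that begin with the same symbol, every suffix starting at an L-type position is lexicographically smaller than every suffix starting at an S-type position. -/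
lemma lex_helper {α : Type*} [LinearOrder α] :
    ∀ (m : ℕ) (f g : ℕ → α) (l1 l2 : ℕ), m < l1 → m < l2 →
      (∀ k < m, f k = g k) → f m < g m →
      List.Lex (· < ·) ((List.range l1).map f) ((List.range l2).map g) := by
  intro m
  induction m with
  | zero =>
    intro f g l1 l2 h1 h2 _ hfg
    obtain ⟨s1, rfl⟩ := Nat.exists_eq_succ_of_ne_zero (by omega : l1 ≠ 0)
    obtain ⟨s2, rfl⟩ := Nat.exists_eq_succ_of_ne_zero (by omega : l2 ≠ 0)
    rw [List.range_succ_eq_map, List.range_succ_eq_map]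
    simp only [List.map_cons, List.map_map]
    exact List.Lex.rel hfg
  | succ m ih =>
    intro f g l1 l2 h1 h2 heq hfg
    obtain ⟨s1, rfl⟩ := Nat.exists_eq_succ_of_ne_zero (by omega : l1 ≠ 0)
    obtain ⟨s2, rfl⟩ := Nat.exists_eq_succ_of_ne_zero (by omega : l2 ≠ 0)
    rw [List.range_succ_eq_map, List.range_succ_eq_map]
    simp only [List.map_cons, List.map_map]
    rw [heq 0 (by omega)]
    exact List.Lex.cons (ih (fun k => f (k + 1)) (fun k => g (k + 1)) s1 s2
      (by omega) (by omega) (fun k hk => heq (k + 1) (by omega)) hfg)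

lemma ltypeAux_spec {α : Type*} [LinearOrder α] (T : ℕ → α) :
    ∀ f i, LTypeAux T f i →
      ∃ a, 1 ≤ a ∧ a ≤ f ∧ (∀ k < a, T (i + k) = T i) ∧ T (i + a) < T i := by
  intro f
  induction f with
  | zero => intro i h; exact absurd h (by simp [LTypeAux])
  | succ f ih =>
    intro i h
    rcases h with h | ⟨heq, h⟩
    · refine ⟨1, le_refl _, by omega, fun k hk => ?_, by simpa using h⟩
      interval_cases k; simp
    · obtain ⟨a, ha1, ha2, ha3, ha4⟩ := ih (i + 1) h
      refine ⟨a + 1, by omega, by omega, ?_, ?_⟩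
      · intro k hk
        match k with
        | 0 => simp
        | m + 1 =>
          rw [show i + (m + 1) = (i + 1) + m by ring, ha3 m (by omega), ← heq]
      · rw [show i + (a + 1) = (i + 1) + a by ring]
        exact ha4.trans_eq heq.symm

lemma stypeAux_spec {α : Type*} [LinearOrder α] (T : ℕ → α) :
    ∀ f j, STypeAux T f j →
      (∀ k ≤ f, T (j + k) = T j) ∨
      ∃ b, b ≤ f ∧ (∀ k < b, T (j + k) = T j) ∧ T j < T (j + b) := by
  intro f
  induction f with
  | zero =>
    intro j _
    left; intro k hk; interval_cases k; simp
  | succ f ih =>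
    intro j h
    rcases h with h | ⟨heq, h⟩
    · refine Or.inr ⟨1, by omega, fun k hk => ?_, by simpa using h⟩
      interval_cases k; simp
    · rcases ih (j + 1) h with hall | ⟨b, hb1, hb2, hb3⟩
      · left
        intro k hk
        match k with
        | 0 => simp
        | m + 1 =>
          rw [show j + (m + 1) = (j + 1) + m by ring, hall m (by omega), ← heq]
      · refine Or.inr ⟨b + 1, by omega, fun k hk => ?_, ?_⟩
        · match k with
          | 0 => simp
          | m + 1 =>
            rw [show j + (m + 1) = (j + 1) + m by ring, hb2 m (by omega), ← heq]
        · rw [show j + (b + 1) = (j + 1) + b by ring, heq]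
          exact hb3

/-- Ko--Aluru: if `T i = T j`, `i` is L-type and `j` is S-type,
then `suffix(i) ≺ suffix(j)`. -/
theorem stmt3 {α : Type*} [LinearOrder α] (T : ℕ → α) (n : ℕ) (sent : α)
    (hn : 2 ≤ n) (hTn : T n = sent)
    (hsent : ∀ a : α, a ≠ sent → sent < a)
    (hT : ∀ i, 1 ≤ i → i < n → T i ≠ sent) :
    ∀ i j, 1 ≤ i → i ≤ n → 1 ≤ j → j ≤ n → T i = T j →
      LType T n i → SType T n j →
      List.Lex (· < ·) (suf T n i) (suf T n j) := by
  intro i j hi1 hin hj1 hjn hij hL hS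
  obtain ⟨a, ha1, ha2, haeq, halt⟩ := ltypeAux_spec T (n - i) i hL
  have hilt : i < n := by omega
  rcases stypeAux_spec T (n - j) j hS with hall | ⟨b, hb1, hbeq, hblt⟩
  · exfalso
    have h1 : T (j + (n - j)) = T j := hall (n - j) le_rfl
    rw [show j + (n - j) = n from by omega, hTn] at h1
    exact hT i hi1 hilt (hij.trans h1.symm)
  · set m := min a b with hm
    have hjb : j + b ≤ n := by omega
    unfold suf
    apply lex_helper m (fun k => T (i + k)) (fun k => T (j + k)) (n + 1 - i) (n + 1 - j)
      (by omega) (by omega)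
    · intro k hk
      rw [haeq k (by omega), hbeq k (by omega), hij]
    · rcases le_or_gt a b with hab | hab
      · have hma : m = a := by omega
        rw [hma]
        have h2 : T j ≤ T (j + a) := by
          rcases eq_or_lt_of_le hab with h | h
          · rw [h]; exact hblt.le
          · rw [hbeq a h]
        exact halt.trans_le (hij ▸ h2)
      · have hmb : m = b := by omega
        rw [hmb, haeq b (by omega), hij]
        exact hblt
end

section
/- (Lemma 7) Let S be a nonempty string over Σ of length x, and let P = {p ∈ [1,n] : S is a prefix of suffix(p)} be nonempty, with p + x ≤ n for every p ∈ P. Enumerate P as p₁, p₂, …, p_m so that suffix(p₁+x) ≺ suffix(p₂+x) ≺ ⋯ ≺ suffix(p_m+x) (possible since all suffixes are pairwise distinct). Then there exists an integer r such that rank(p_o) = r + o − 1 for every o ∈ [1,m], and BWT[r+o−1] = T[p_o − 1] for every o ∈ [1,m]. In words: the suffixes prefixed by S occupy a consecutive interval of ranks, within this interval they appear sorted by their right contexts, and the corresponding BWT range is obtained by listing the symbols preceding the occurrences of S in that order. -/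
theorem strictMonoOn_Icc_of_lt_add_one {β : Type*} [Preorder β] {f : ℕ → β} {a b : ℕ}
    (hf : ∀ k, a ≤ k → k < b → f k < f (k + 1)) : StrictMonoOn f (Set.Icc a b) := by
  rintro i ⟨hai, -⟩ j ⟨-, hjb⟩ hij
  induction j, hij using Nat.le_induction with
  | base => exact hf i hai (by omega)
  | succ j hij ih => exact (ih (by omega)).trans (hf j (by omega) (by omega))

theorem List.IsPrefix.of_append_lt_of_lt_append {α : Type*} [LinearOrder α] :
    ∀ {S u a b : List α}, S ++ a < u → u < S ++ b → S <+: u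
  | [], _, _, _, _, _ => List.nil_prefix
  | c :: _, _, _, _, .cons h₁, .cons h₂ =>
    (List.prefix_cons_inj c).2 (of_append_lt_of_lt_append h₁ h₂)
  | _ :: _, _, _, _, .cons _, .rel h₂ => absurd h₂ (lt_irrefl _)
  | _ :: _, _, _, _, .rel h₁, .cons _ => absurd h₁ (lt_irrefl _)
  | _ :: _, _, _, _, .rel h₁, .rel h₂ => absurd (h₁.trans h₂) (lt_irrefl _)

section Suffix

variable {α : Type*} (T : ℕ → α) (n : ℕ)

theorem length_suf (p : ℕ) : (suf T n p).length = n + 1 - p := by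
  simp [suf]

theorem suf_injOn : Set.InjOn (suf T n) (Set.Iic n) := fun p hp q hq h => by
  have := congrArg List.length h
  simp only [length_suf] at this
  simp only [Set.mem_Iic] at hp hq
  omega

theorem drop_suf (p k : ℕ) : (suf T n p).drop k = suf T n (p + k) := by
  apply List.ext_getElem
  · simp only [List.length_drop, length_suf]; omega
  · intro i _ _
    simp [suf, Nat.add_assoc]

variable {T n}

theorem suf_eq_append_of_prefix {S : List α} {p : ℕ} (h : S <+: suf T n p) :
    suf T n p = S ++ suf T n (p + S.length) := by
  rw [← drop_suf, List.prefix_iff_eq_append.1 h]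

end Suffix

section Rank

variable {α : Type*} [LinearOrder α] {T : ℕ → α} {n : ℕ}

theorem rnk_eq_one_add_ncard (p : ℕ) :
    rnk T n p = 1 + Set.ncard {q | 1 ≤ q ∧ q ≤ n ∧ suf T n q < suf T n p} := rfl

theorem one_le_rnk (p : ℕ) : 1 ≤ rnk T n p := Nat.le_add_right 1 _

theorem rnk_le {p : ℕ} (hp : 1 ≤ p) (hpn : p ≤ n) : rnk T n p ≤ n := by
  have hsub : {q | 1 ≤ q ∧ q ≤ n ∧ suf T n q < suf T n p} ⊆ Set.Icc 1 n \ {p} :=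
    fun q ⟨hq, hqn, hlt⟩ => ⟨⟨hq, hqn⟩, fun hqp => hlt.ne (congrArg (suf T n) hqp)⟩
  have hcard := Set.ncard_le_ncard hsub (Set.finite_Icc 1 n).sdiff
  rw [Set.ncard_sdiff_singleton_of_mem (Set.mem_Icc.2 ⟨hp, hpn⟩), Set.ncard_Icc_nat] at hcard
  rw [rnk_eq_one_add_ncard]
  omega

theorem rnk_eq_add_one_of_no_suf_between {p p' : ℕ} (hp : 1 ≤ p) (hpn : p ≤ n)
    (hlt : suf T n p < suf T n p')
    (hgap : ∀ q, 1 ≤ q → q ≤ n → suf T n p < suf T n q → suf T n p' ≤ suf T n q) :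
    rnk T n p' = rnk T n p + 1 := by
  have hset : {q | 1 ≤ q ∧ q ≤ n ∧ suf T n q < suf T n p'} =
      insert p {q | 1 ≤ q ∧ q ≤ n ∧ suf T n q < suf T n p} := by
    ext q
    simp only [Set.mem_ofPred_eq, Set.mem_insert_iff]
    constructor
    · rintro ⟨hq, hqn, hqp'⟩
      rcases lt_trichotomy (suf T n q) (suf T n p) with h | h | h
      · exact .inr ⟨hq, hqn, h⟩
      · exact .inl (suf_injOn T n hqn hpn h)
      · exact absurd hqp' (hgap q hq hqn h).not_gt
    · rintro (rfl | ⟨hq, hqn, hqp⟩)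
      · exact ⟨hp, hpn, hlt⟩
      · exact ⟨hq, hqn, hqp.trans hlt⟩
  have hfin : {q | 1 ≤ q ∧ q ≤ n ∧ suf T n q < suf T n p}.Finite :=
    (Set.finite_Icc 1 n).subset fun q ⟨hq, hqn, _⟩ => ⟨hq, hqn⟩
  rw [rnk_eq_one_add_ncard, rnk_eq_one_add_ncard, hset,
    Set.ncard_insert_of_notMem (fun h => h.2.2.false) hfin]
  omega

end Rank

section Occurrences

variable {α : Type*} [LinearOrder α] {T : ℕ → α} {n : ℕ} {S : List α} {m : ℕ} {e : ℕ → ℕ}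

theorem strictMonoOn_suf_occ (hocc : ∀ o, 1 ≤ o → o ≤ m → S <+: suf T n (e o))
    (hsorted : ∀ o, 1 ≤ o → o < m →
      suf T n (e o + S.length) < suf T n (e (o + 1) + S.length)) :
    StrictMonoOn (fun o => suf T n (e o)) (Set.Icc 1 m) :=
  strictMonoOn_Icc_of_lt_add_one fun o h1 h2 => by
    rw [suf_eq_append_of_prefix (hocc o h1 h2.le),
      suf_eq_append_of_prefix (hocc (o + 1) (by omega) h2)]
    exact List.Lex.append_left _ (hsorted o h1 h2) S

theorem rnk_occ_add_one (he : ∀ p, (1 ≤ p ∧ p ≤ n ∧ S <+: suf T n p) ↔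
      ∃ o, 1 ≤ o ∧ o ≤ m ∧ e o = p)
    (hsorted : ∀ o, 1 ≤ o → o < m →
      suf T n (e o + S.length) < suf T n (e (o + 1) + S.length))
    {o : ℕ} (h1 : 1 ≤ o) (h2 : o < m) :
    rnk T n (e (o + 1)) = rnk T n (e o) + 1 := by
  have hocc o (h1 : 1 ≤ o) (h2 : o ≤ m) := (he (e o)).2 ⟨o, h1, h2, rfl⟩
  have hmono := strictMonoOn_suf_occ (fun o h1 h2 => (hocc o h1 h2).2.2) hsorted
  have ho : o ∈ Set.Icc 1 m := ⟨h1, h2.le⟩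
  have ho' : o + 1 ∈ Set.Icc 1 m := ⟨by omega, h2⟩
  obtain ⟨hp, hpn, hpre⟩ := hocc o h1 h2.le
  refine rnk_eq_add_one_of_no_suf_between hp hpn (hmono ho ho' (lt_add_one o)) ?_
  intro q hq hqn hlt
  by_contra! hgt
  have hqpre : S <+: suf T n q := by
    rw [suf_eq_append_of_prefix hpre] at hlt
    rw [suf_eq_append_of_prefix (hocc (o + 1) ho'.1 h2).2.2] at hgt
    exact List.IsPrefix.of_append_lt_of_lt_append hlt hgt
  obtain ⟨o', h1', h2', rfl⟩ := (he q).1 ⟨hq, hqn, hqpre⟩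
  have := (hmono.lt_iff_lt ho ⟨h1', h2'⟩).1 hlt
  have := (hmono.lt_iff_lt ⟨h1', h2'⟩ ho').1 hgt
  omega

theorem rnk_occ_eq (he : ∀ p, (1 ≤ p ∧ p ≤ n ∧ S <+: suf T n p) ↔
      ∃ o, 1 ≤ o ∧ o ≤ m ∧ e o = p)
    (hsorted : ∀ o, 1 ≤ o → o < m →
      suf T n (e o + S.length) < suf T n (e (o + 1) + S.length))
    {o : ℕ} (h1 : 1 ≤ o) (h2 : o ≤ m) :
    rnk T n (e o) = rnk T n (e 1) + o - 1 := by
  induction o, h1 using Nat.le_induction with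
  | base => simp
  | succ o h1 ih => rw [rnk_occ_add_one he hsorted h1 h2, ih (by omega)]; omega

end Occurrences

theorem stmt13_general {α : Type*} [LinearOrder α] (T : ℕ → α) (n : ℕ)
    -- the suffix array is the inverse of rank, and BWT k = T (SA k - 1):
    (SA : ℕ → ℕ) (hSA : ∀ p, 1 ≤ p → p ≤ n → SA (rnk T n p) = p)
    (bwt : ℕ → α) (hbwt : ∀ k, 1 ≤ k → k ≤ n → bwt k = T (SA k - 1))
    -- S, its occurrences, and their enumeration sorted by right context:
    (S : List α) (x : ℕ) (hx : x = S.length)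
    (m : ℕ) (e : ℕ → ℕ)
    (he : ∀ p, (1 ≤ p ∧ p ≤ n ∧ S <+: suf T n p) ↔ ∃ o, 1 ≤ o ∧ o ≤ m ∧ e o = p)
    (hsorted : ∀ o, 1 ≤ o → o < m →
      List.Lex (· < ·) (suf T n (e o + x)) (suf T n (e (o + 1) + x))) :
    ∃ r : ℕ, ∀ o, 1 ≤ o → o ≤ m →
      rnk T n (e o) = r + o - 1 ∧ bwt (r + o - 1) = T (e o - 1) := by
  subst hx
  refine ⟨rnk T n (e 1), fun o h1 h2 => ?_⟩
  have hrank := rnk_occ_eq he hsorted h1 h2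
  obtain ⟨hp, hpn, -⟩ := (he (e o)).2 ⟨o, h1, h2, rfl⟩
  refine ⟨hrank, ?_⟩
  rw [← hrank, hbwt _ (one_le_rnk _) (rnk_le hp hpn), hSA _ hp hpn]

/-- Lemma 7: let `S` be nonempty of length `x`, and let
`p₁, …, p_m` enumerate the positions whose suffix is prefixed by `S`, sorted by
the right contexts `suffix(pₒ + x)`. Then the ranks `rank(pₒ)` form a consecutive
interval `r, r+1, …, r+m-1` in that order, and `BWT[r+o-1] = T[pₒ - 1]`. -/
theorem stmt13 {α : Type*} [LinearOrder α] (T : ℕ → α) (n : ℕ) (sent : α)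
    (hn : 2 ≤ n) (hTn : T n = sent) (hT0 : T 0 = sent)
    (hsent : ∀ a : α, a ≠ sent → sent < a)
    (hT : ∀ i, 1 ≤ i → i < n → T i ≠ sent)
    -- the suffix array is the inverse of rank, and BWT k = T (SA k - 1):
    (SA : ℕ → ℕ) (hSA : ∀ p, 1 ≤ p → p ≤ n → SA (rnk T n p) = p)
    (bwt : ℕ → α) (hbwt : ∀ k, 1 ≤ k → k ≤ n → bwt k = T (SA k - 1))
    -- S, its occurrences, and their enumeration sorted by right context:
    (S : List α) (hS : S ≠ []) (x : ℕ) (hx : x = S.length)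
    (m : ℕ) (hm : 1 ≤ m) (e : ℕ → ℕ)
    (he : ∀ p, (1 ≤ p ∧ p ≤ n ∧ S <+: suf T n p) ↔ ∃ o, 1 ≤ o ∧ o ≤ m ∧ e o = p)
    (hinj : ∀ o o', 1 ≤ o → o ≤ m → 1 ≤ o' → o' ≤ m → e o = e o' → o = o')
    (hbound : ∀ o, 1 ≤ o → o ≤ m → e o + x ≤ n)
    (hsorted : ∀ o, 1 ≤ o → o < m →
      List.Lex (· < ·) (suf T n (e o + x)) (suf T n (e (o + 1) + x))) :
    ∃ r : ℕ, ∀ o, 1 ≤ o → o ≤ m →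
      rnk T n (e o) = r + o - 1 ∧ bwt (r + o - 1) = T (e o - 1) :=
  stmt13_general T n SA hSA bwt hbwt S x hx m e he hsorted
end
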